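/- arXiv:0904.4027 — 2 statements merged into one kernel-verified Lean document; each statement's English description precedes it below -/
import Mathlib

section
/- Let β ≥ 1/2. Then for every x > 0 and every integer k ≥ 2 the inequality (−1)^k ψ^{(k−1)}(x + β) ≤ (k−2)!/x^{k−1} holds. -/
/-!
Both `ψ = (log Γ)'` and `S(x) = ∑ (1/(n+1) - 1/(x+n))` are increasing on `(0, ∞)` and satisfy
`f (x + 1) = f x + 1/x`; two such functions differ by a constant, since their difference is
`1`-periodic while each of them varies by at most `M/x` over `[x, x + M]`. Differentiating `S`
termwise gives `(-1)^(k+1) ψ^(k)(x) = k! ∑ (x+n)^(-k-1)`. The series is decreasing in `x`, and at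
`x + 1/2` each term is dominated by a telescoping difference:
`j/(a + 1/2)^(j+1) ≤ a^(-j) - (a+1)^(-j)`, which comes from
`(p+h)^j - (p-h)^j ≥ 2 j h p^(j-1)` for `0 ≤ h ≤ p`.
-/

open Real

/-- The polygamma function `ψ^{(k)}`: the `k`-th derivative of the digamma function,
i.e. the `(k+1)`-st derivative of `ln ∘ Γ`. -/
noncomputable def polygamma (k : ℕ) : ℝ → ℝ :=
  iteratedDeriv (k + 1) (fun x : ℝ => Real.log (Real.Gamma x))

open Filter Topology Set
open scoped Nat

theorem two_mul_pow_le_and_le_mul_sub {p h : ℝ} (hh : 0 ≤ h) (hhp : h ≤ p) (n : ℕ) :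
    2 * p ^ n ≤ (p + h) ^ n + (p - h) ^ n ∧
      2 * n * h * p ^ n ≤ p * ((p + h) ^ n - (p - h) ^ n) := by
  induction n with
  | zero => norm_num
  | succ n ih =>
    obtain ⟨hsum, hdiff⟩ := ih
    have hmono : (p - h) ^ n ≤ (p + h) ^ n := pow_le_pow_left₀ (by linarith) (by linarith) n
    have hp : 0 ≤ p := hh.trans hhp
    simp only [pow_succ]
    push_cast
    constructor
    · nlinarith [mul_le_mul_of_nonneg_left hsum hp]
    · nlinarith [mul_le_mul_of_nonneg_left hsum hh, mul_le_mul_of_nonneg_left hdiff hp,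
        mul_le_mul_of_nonneg_left hsum hp]

theorem two_mul_mul_div_pow_le_inv_pow_sub_inv_pow {p h : ℝ} (hh : 0 ≤ h) (hhp : h < p)
    (j : ℕ) :
    2 * j * h / p ^ (j + 1) ≤ ((p - h) ^ j)⁻¹ - ((p + h) ^ j)⁻¹ := by
  obtain ⟨-, hdiff⟩ := two_mul_pow_le_and_le_mul_sub hh hhp.le j
  have hp : 0 < p := hh.trans_lt hhp
  have hpm : 0 < p - h := by linarith
  have hprod : ((p + h) * (p - h)) ^ j ≤ (p ^ 2) ^ j :=
    pow_le_pow_left₀ (by nlinarith) (by nlinarith) j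
  rw [inv_sub_inv (by positivity) (by positivity),
    div_le_div_iff₀ (by positivity) (by positivity), ← mul_pow]
  calc 2 * j * h * ((p - h) * (p + h)) ^ j
      ≤ 2 * j * h * (p ^ 2) ^ j := by
        rw [mul_comm (p - h)]; gcongr
    _ = 2 * j * h * p ^ j * p ^ j := by ring
    _ ≤ p * ((p + h) ^ j - (p - h) ^ j) * p ^ j := by gcongr
    _ = _ := by ring

noncomputable def hurwitzSeries (k : ℕ) (x : ℝ) : ℝ := ∑' n : ℕ, ((x + n) ^ k)⁻¹

noncomputable def digammaSeries (x : ℝ) : ℝ :=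
  ∑' n : ℕ, (((n : ℝ) + 1)⁻¹ - (x + n)⁻¹)

theorem inv_pow_add_natCast_le {a y : ℝ} (ha : 0 < a) (hay : a ≤ y) (n k : ℕ) :
    ((y + n) ^ k)⁻¹ ≤ ((a + n) ^ k)⁻¹ :=
  inv_anti₀ (by positivity) (pow_le_pow_left₀ (by positivity) (by linarith) k)

theorem summable_inv_pow_add_natCast {k : ℕ} (hk : 2 ≤ k) {x : ℝ} (hx : 0 < x) :
    Summable fun n : ℕ => ((x + n) ^ k)⁻¹ := by
  refine ((summable_one_div_nat_add_rpow x k).mpr (by exact_mod_cast hk)).congr fun n => ?_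
  rw [one_div, abs_of_pos (by positivity), rpow_natCast, add_comm]

theorem antitoneOn_hurwitzSeries {k : ℕ} (hk : 2 ≤ k) : AntitoneOn (hurwitzSeries k) (Ioi 0) :=
  fun _ ha _ _ hab => Summable.tsum_le_tsum (inv_pow_add_natCast_le ha hab · k)
    (summable_inv_pow_add_natCast hk (ha.trans_le hab)) (summable_inv_pow_add_natCast hk ha)

theorem hasDerivAt_inv_pow_add (k : ℕ) {c y : ℝ} (hy : y + c ≠ 0) :
    HasDerivAt (fun y => ((y + c) ^ k)⁻¹) (-k * ((y + c) ^ (k + 1))⁻¹) y := by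
  refine ((((hasDerivAt_id' y).add_const c).fun_pow k).fun_inv (pow_ne_zero k hy)).congr_deriv ?_
  rcases k with _ | k
  · simp
  · rw [Nat.add_sub_cancel]
    field_simp
    ring

theorem hasDerivAt_hurwitzSeries {k : ℕ} (hk : 2 ≤ k) {x : ℝ} (hx : 0 < x) :
    HasDerivAt (hurwitzSeries k) (-k * hurwitzSeries (k + 1) x) x := by
  have hx2 : 0 < x / 2 := half_pos hx
  rw [hurwitzSeries, ← tsum_mul_left]
  refine hasDerivAt_tsum_of_isPreconnected
    ((summable_inv_pow_add_natCast (by omega : 2 ≤ k + 1) hx2).mul_left (k : ℝ)) isOpen_Ioi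
    isPreconnected_Ioi
    (fun n y hy => hasDerivAt_inv_pow_add k (by have : 0 < y := hx2.trans hy; positivity))
    (fun n y hy => ?_) (by simpa using hx2) (summable_inv_pow_add_natCast hk hx)
    (by simpa using hx2)
  have hy : x / 2 < y := hy
  have : 0 < y := hx2.trans hy
  rw [norm_mul, norm_neg, Real.norm_natCast, Real.norm_of_nonneg (by positivity)]
  exact mul_le_mul_of_nonneg_left (inv_pow_add_natCast_le hx2 hy.le n (k + 1)) (Nat.cast_nonneg k)

theorem hasDerivAt_digammaSeries_term (n : ℕ) {y : ℝ} (hy : 0 < y) :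
    HasDerivAt (fun y : ℝ => ((n : ℝ) + 1)⁻¹ - (y + n)⁻¹) ((y + n) ^ 2)⁻¹ y := by
  refine ((((hasDerivAt_id' y).add_const (n : ℝ)).fun_inv
    (by positivity)).const_sub _).congr_deriv ?_
  rw [neg_div, neg_neg, one_div]

theorem norm_inv_sq_add_natCast_le {ε y : ℝ} (hε : 0 < ε) (hy : y ∈ Ioi ε) (n : ℕ) :
    ‖((y + n) ^ 2)⁻¹‖ ≤ ((ε + n) ^ 2)⁻¹ := by
  rw [norm_of_nonneg (by have : 0 < y := hε.trans hy; positivity)]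
  exact inv_pow_add_natCast_le hε (le_of_lt hy) n 2

-- At `x = 1` every term vanishes; the derivative bound carries summability to all `x > 0`.
theorem summable_digammaSeries {x : ℝ} (hx : 0 < x) :
    Summable fun n : ℕ => ((n : ℝ) + 1)⁻¹ - (x + n)⁻¹ := by
  have hε : 0 < min x 1 / 2 := by positivity
  have hε1 : min x 1 / 2 < 1 := by linarith [min_le_right x 1]
  have hεx : min x 1 / 2 < x := by linarith [min_le_left x 1]
  refine summable_of_summable_hasDerivAt_of_isPreconnected
    (summable_inv_pow_add_natCast le_rfl hε) isOpen_Ioi isPreconnected_Ioi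
    (fun n y hy => hasDerivAt_digammaSeries_term n (hε.trans hy))
    (fun n y hy => norm_inv_sq_add_natCast_le hε hy n) hε1 ?_ hεx
  simp [add_comm]

theorem hasDerivAt_digammaSeries {x : ℝ} (hx : 0 < x) :
    HasDerivAt digammaSeries (hurwitzSeries 2 x) x := by
  have hx2 : 0 < x / 2 := half_pos hx
  have hxx : x / 2 < x := half_lt_self hx
  exact hasDerivAt_tsum_of_isPreconnected
    (summable_inv_pow_add_natCast le_rfl hx2) isOpen_Ioi isPreconnected_Ioi
    (fun n y hy => hasDerivAt_digammaSeries_term n (hx2.trans hy))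
    (fun n y hy => norm_inv_sq_add_natCast_le hx2 hy n) hxx (summable_digammaSeries hx) hxx

theorem digammaSeries_add_one {x : ℝ} (hx : 0 < x) :
    digammaSeries (x + 1) = digammaSeries x + x⁻¹ := by
  have htel : HasSum (fun n : ℕ => (x + n)⁻¹ - (x + (n + 1 : ℕ))⁻¹) x⁻¹ := by
    rw [hasSum_iff_tendsto_nat_of_nonneg
      fun n => sub_nonneg.2 (inv_anti₀ (by positivity) (by push_cast; linarith))]
    simp_rw [Finset.sum_range_sub' fun i : ℕ => (x + i)⁻¹]
    simpa using tendsto_const_nhds.sub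
      (tendsto_inv_atTop_zero.comp (tendsto_atTop_add_const_left _ x tendsto_natCast_atTop_atTop))
  have hdiff : digammaSeries (x + 1) - digammaSeries x = x⁻¹ := by
    rw [digammaSeries, digammaSeries,
      ← (summable_digammaSeries (by linarith)).tsum_sub (summable_digammaSeries hx)]
    refine (tsum_congr fun n => ?_).trans htel.tsum_eq
    push_cast
    ring
  linarith

theorem monotoneOn_digammaSeries : MonotoneOn digammaSeries (Ioi 0) :=
  fun _ ha _ hb hab => Summable.tsum_le_tsum
    (fun n => sub_le_sub_left (by simpa using inv_pow_add_natCast_le ha hab n 1) _)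
    (summable_digammaSeries ha) (summable_digammaSeries (ha.trans_le hab))

theorem mul_hurwitzSeries_add_half_le (j : ℕ) {x : ℝ} (hx : 0 < x) :
    j * hurwitzSeries (j + 1) (x + 1 / 2) ≤ (x ^ j)⁻¹ := by
  rw [hurwitzSeries, ← tsum_mul_left]
  refine Real.tsum_le_of_sum_range_le (fun n => by positivity) fun N => ?_
  calc ∑ n ∈ Finset.range N, j * ((x + 1 / 2 + n) ^ (j + 1))⁻¹
      ≤ ∑ n ∈ Finset.range N, (((x + n) ^ j)⁻¹ - ((x + (n + 1 : ℕ)) ^ j)⁻¹) := by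
        refine Finset.sum_le_sum fun n _ => ?_
        have := two_mul_mul_div_pow_le_inv_pow_sub_inv_pow (p := x + 1 / 2 + n) (h := 1 / 2)
          (by norm_num) (by linarith [n.cast_nonneg (α := ℝ)]) j
        rwa [show x + 1 / 2 + n - 1 / 2 = x + n by ring,
          show x + 1 / 2 + n + 1 / 2 = x + (n + 1 : ℕ) by push_cast; ring,
          show 2 * (j : ℝ) * (1 / 2) = j by ring, div_eq_mul_inv] at this
    _ = (x ^ j)⁻¹ - ((x + N) ^ j)⁻¹ := by
        rw [Finset.sum_range_sub' fun n : ℕ => ((x + n) ^ j)⁻¹, Nat.cast_zero, add_zero]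
    _ ≤ (x ^ j)⁻¹ := sub_le_self _ (by positivity)

theorem apply_add_natCast_le {g : ℝ → ℝ} (hg : ∀ t, 0 < t → g (t + 1) = g t + t⁻¹)
    {t : ℝ} (ht : 0 < t) (M : ℕ) : g (t + M) ≤ g t + M / t := by
  induction M with
  | zero => simp
  | succ M ih =>
    have htM : 0 < t + M := by positivity
    have : (t + M)⁻¹ ≤ t⁻¹ := inv_anti₀ ht (by linarith [M.cast_nonneg (α := ℝ)])
    rw [Nat.cast_succ, ← add_assoc, hg _ htM, add_div, one_div]
    linarith

theorem sub_eq_sub_of_monotoneOn_of_add_one {g h : ℝ → ℝ} (hg : MonotoneOn g (Ioi 0))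
    (hh : MonotoneOn h (Ioi 0)) (hg1 : ∀ t, 0 < t → g (t + 1) = g t + t⁻¹)
    (hh1 : ∀ t, 0 < t → h (t + 1) = h t + t⁻¹) {a b : ℝ} (ha : 0 < a) (hb : 0 < b) :
    g a - h a = g b - h b := by
  wlog hab : a ≤ b generalizing a b
  · exact (this hb ha (le_of_not_ge hab)).symm
  have hperiodic : ∀ t, 0 < t → ∀ n : ℕ, g (t + n) - h (t + n) = g t - h t := by
    intro t ht n
    induction n with
    | zero => simp
    | succ n ih =>
      rw [Nat.cast_succ, ← add_assoc, hg1 _ (by positivity), hh1 _ (by positivity)]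
      linarith
  obtain ⟨M, hM⟩ := exists_nat_ge (b - a)
  have hbound : ∀ n : ℕ, |(g b - h b) - (g a - h a)| ≤ M / (a + n) := by
    intro n
    have han : 0 < a + n := by positivity
    have hbn : 0 < b + n := by positivity
    have haM : 0 < a + n + M := by positivity
    have hle : a + n ≤ b + n := by linarith
    have hle' : b + n ≤ a + n + M := by linarith
    have := hg han hbn hle
    have := hh han hbn hle
    have := hg hbn haM hle'
    have := hh hbn haM hle'
    rw [← hperiodic a ha n, ← hperiodic b hb n, abs_le]
    constructor <;>
      linarith [apply_add_natCast_le hg1 han M, apply_add_natCast_le hh1 han M]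
  have hlim : Tendsto (fun n : ℕ => (M : ℝ) / (a + n)) atTop (𝓝 0) :=
    tendsto_const_nhds.div_atTop (tendsto_atTop_add_const_left _ a tendsto_natCast_atTop_atTop)
  have := abs_nonpos_iff.1 (ge_of_tendsto' hlim hbound)
  linarith

theorem differentiableAt_log_Gamma {x : ℝ} (hx : 0 < x) :
    DifferentiableAt ℝ (fun x => log (Gamma x)) x :=
  (differentiableAt_Gamma fun m => ((neg_nonpos.2 m.cast_nonneg).trans_lt hx).ne').log
    (Gamma_pos_of_pos hx).ne'

theorem deriv_log_Gamma_add_one {x : ℝ} (hx : 0 < x) :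
    deriv (fun x => log (Gamma x)) (x + 1) = deriv (fun x => log (Gamma x)) x + x⁻¹ := by
  rw [← deriv_comp_add_const, ← deriv_log,
    ← deriv_add (differentiableAt_log_Gamma hx) (differentiableAt_log hx.ne')]
  refine Filter.EventuallyEq.deriv_eq ?_
  filter_upwards [eventually_gt_nhds hx] with t ht
  rw [Gamma_add_one ht.ne', log_mul ht.ne' (Gamma_pos_of_pos ht).ne', add_comm]
  rfl

theorem exists_deriv_log_Gamma_eq_digammaSeries_add :
    ∃ c, ∀ x, 0 < x → deriv (fun x => log (Gamma x)) x = digammaSeries x + c :=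
  ⟨deriv (fun x => log (Gamma x)) 1 - digammaSeries 1, fun x hx => by
    have := sub_eq_sub_of_monotoneOn_of_add_one (g := deriv fun x => log (Gamma x))
      (convexOn_log_Gamma.monotoneOn_deriv fun _ hy => differentiableAt_log_Gamma hy)
      monotoneOn_digammaSeries (fun _ => deriv_log_Gamma_add_one) (fun _ => digammaSeries_add_one)
      hx one_pos
    linarith⟩

theorem polygamma_one {x : ℝ} (hx : 0 < x) : polygamma 1 x = hurwitzSeries 2 x := by
  obtain ⟨c, hc⟩ := exists_deriv_log_Gamma_eq_digammaSeries_add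
  rw [polygamma, iteratedDeriv_succ, iteratedDeriv_one,
    Filter.EventuallyEq.deriv_eq (eventually_of_mem (Ioi_mem_nhds hx) hc)]
  exact ((hasDerivAt_digammaSeries hx).add_const c).deriv

theorem polygamma_eq_hurwitzSeries {k : ℕ} (hk : 1 ≤ k) {x : ℝ} (hx : 0 < x) :
    polygamma k x = (-1) ^ (k + 1) * k ! * hurwitzSeries (k + 1) x := by
  induction k, hk using Nat.le_induction generalizing x with
  | base => simp [polygamma_one hx]
  | succ k hk ih =>
    have hderiv := (hasDerivAt_hurwitzSeries (by omega : 2 ≤ k + 1) hx).const_mul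
      ((-1) ^ (k + 1) * k ! : ℝ)
    rw [polygamma, iteratedDeriv_succ, ← polygamma,
      Filter.EventuallyEq.deriv_eq (eventually_of_mem (Ioi_mem_nhds hx) fun y hy => ih hy),
      hderiv.deriv, Nat.factorial_succ]
    push_cast
    ring

theorem stmt_7 (β : ℝ) (hβ : 1 / 2 ≤ β) (x : ℝ) (hx : 0 < x) (k : ℕ) (hk : 2 ≤ k) :
    (-1 : ℝ) ^ k * polygamma (k - 1) (x + β)
      ≤ (Nat.factorial (k - 2) : ℝ) / x ^ (k - 1) := by
  obtain ⟨i, rfl⟩ : ∃ i, k = i + 2 := ⟨k - 2, by omega⟩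
  have hxβ : 0 < x + β := by linarith
  rw [Nat.add_sub_cancel, show i + 2 - 1 = i + 1 by omega,
    polygamma_eq_hurwitzSeries (by omega) hxβ, ← mul_assoc, ← mul_assoc, ← pow_add,
    Even.neg_one_pow ⟨i + 2, by omega⟩, one_mul]
  calc ((i + 1)! : ℝ) * hurwitzSeries (i + 2) (x + β)
      ≤ (i + 1)! * hurwitzSeries (i + 2) (x + 1 / 2) := by
        gcongr
        exact antitoneOn_hurwitzSeries le_add_self (show (0 : ℝ) < x + 1 / 2 by positivity) hxβ
          (by linarith)
    _ = i ! * ((i + 1 : ℕ) * hurwitzSeries (i + 1 + 1) (x + 1 / 2)) := by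
        rw [Nat.factorial_succ]
        push_cast
        ring
    _ ≤ i ! * (x ^ (i + 1))⁻¹ := by gcongr; exact mul_hurwitzSeries_add_half_le (i + 1) hx
    _ = i ! / x ^ (i + 1) := (div_eq_mul_inv _ _).symm
end

section
/- Let n ≥ 1 be an integer, x_1, …, x_n > 0, and p_1, …, p_n ≥ 0 with p_1 + ⋯ + p_n = 1. If α ≥ β ≥ 1/2, then (∏_{k=1}^n Γ(x_k + β)^{p_k}) / Γ(∑_{k=1}^n p_k x_k + β) ≤ (∏_{k=1}^n x_k^{p_k (x_k + β − α)}) / (∑_{k=1}^n p_k x_k)^{∑_{k=1}^n p_k x_k + β − α}. -/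
/-! The function `F x = log Γ(x + β) - (x + β - α) log x` is concave on `(0, ∞)`: formally
`F'' x = ψ'(x + β) - 1 / x - (α - β) / x ^ 2`, and `ψ'(x + β) = ∑ 1 / (x + β + j) ^ 2 ≤ 1 / x`
once `β ≥ 1 / 2`, by comparison with the telescoping sum of `1 / ((x + j) (x + j + 1))`.
To avoid the trigamma function, concavity is proved for the logarithms of Euler's approximants
`Γₙ` and passed to the limit. After taking logarithms, the inequality is Jensen's inequality
`∑ pₖ F(xₖ) ≤ F(∑ pₖ xₖ)`. -/

open Real Finset Filter

theorem sum_range_inv_add_sq_le_inv {x β : ℝ} (hx : 0 < x) (hβ : 1 / 2 ≤ β) (m : ℕ) :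
    ∑ j ∈ range m, ((x + β + j) ^ 2)⁻¹ ≤ x⁻¹ := by
  have term_le (j : ℕ) : ((x + β + j) ^ 2)⁻¹ ≤ (x + j)⁻¹ - (x + (j + 1 : ℕ))⁻¹ := by
    calc ((x + β + j) ^ 2)⁻¹ ≤ ((x + j) * (x + j + 1))⁻¹ :=
          inv_anti₀ (by positivity) (by nlinarith)
      _ = (x + j)⁻¹ - (x + (j + 1 : ℕ))⁻¹ := by push_cast; field_simp; ring
  calc ∑ j ∈ range m, ((x + β + j) ^ 2)⁻¹
      ≤ ∑ j ∈ range m, ((x + j)⁻¹ - (x + (j + 1 : ℕ))⁻¹) := sum_le_sum fun j _ => term_le j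
    _ = x⁻¹ - (x + m)⁻¹ := by rw [sum_range_sub' (fun j : ℕ => (x + j)⁻¹)]; simp
    _ ≤ x⁻¹ := sub_le_self _ (by positivity)

section
variable {β x : ℝ} (n : ℕ)
open BohrMollerup

theorem hasDerivAt_logGammaSeq_add_sub_mul_log (hx : 0 < x) (hxβ : 0 < x + β) :
    HasDerivAt (fun y => logGammaSeq (y + β) n - y * log y)
      (log n - ∑ m ∈ range (n + 1), (x + β + m)⁻¹ - (log x + 1)) x := by
  have hsum : HasDerivAt (fun y => ∑ m ∈ range (n + 1), log (y + β + m))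
      (∑ m ∈ range (n + 1), (x + β + m)⁻¹) x :=
    HasDerivAt.fun_sum fun m _ => by
      simpa using (((hasDerivAt_id x).add_const β).add_const (m : ℝ)).log (by positivity)
  have hlin : HasDerivAt (fun y => (y + β) * log n + log n.factorial) (log n) x := by
    simpa using (((hasDerivAt_id x).add_const β).mul_const (log n)).add_const (log n.factorial)
  exact (hlin.sub hsum).sub (hasDerivAt_mul_log hx.ne')

theorem hasDerivAt_deriv_logGammaSeq_add_sub_mul_log (hx : 0 < x) (hxβ : 0 < x + β) :
    HasDerivAt (fun y => log n - ∑ m ∈ range (n + 1), (y + β + m)⁻¹ - (log y + 1))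
      (∑ m ∈ range (n + 1), ((x + β + m) ^ 2)⁻¹ - x⁻¹) x := by
  have hsum : HasDerivAt (fun y => ∑ m ∈ range (n + 1), (y + β + m)⁻¹)
      (-∑ m ∈ range (n + 1), ((x + β + m) ^ 2)⁻¹) x := by
    rw [← sum_neg_distrib]
    exact HasDerivAt.fun_sum fun m _ => by
      simpa [neg_div, one_div] using
        (((hasDerivAt_id x).add_const β).add_const (m : ℝ)).fun_inv (by positivity)
  exact (((hasDerivAt_const x (log n)).sub hsum).sub
    ((hasDerivAt_log hx.ne').add_const 1)).congr_deriv (by ring)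

theorem concaveOn_logGammaSeq_add_sub_mul_log (hβ : 1 / 2 ≤ β) :
    ConcaveOn ℝ (Set.Ioi 0) (fun x => logGammaSeq (x + β) n - x * log x) := by
  have hxβ {x : ℝ} (hx : x ∈ Set.Ioi 0) : 0 < x + β := by
    rw [Set.mem_Ioi] at hx; linarith
  refine concaveOn_of_hasDerivWithinAt2_nonpos (convex_Ioi 0)
    (f' := fun x => log n - ∑ m ∈ range (n + 1), (x + β + m)⁻¹ - (log x + 1))
    (f'' := fun x => ∑ m ∈ range (n + 1), ((x + β + m) ^ 2)⁻¹ - x⁻¹)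
    (fun x hx =>
      (hasDerivAt_logGammaSeq_add_sub_mul_log n hx (hxβ hx)).continuousAt.continuousWithinAt)
    (fun x hx => ?_) (fun x hx => ?_) (fun x hx => ?_)
  all_goals rw [interior_Ioi] at hx
  · exact (hasDerivAt_logGammaSeq_add_sub_mul_log n hx (hxβ hx)).hasDerivWithinAt
  · exact (hasDerivAt_deriv_logGammaSeq_add_sub_mul_log n hx (hxβ hx)).hasDerivWithinAt
  · exact sub_nonpos.2 (sum_range_inv_add_sq_le_inv hx hβ _)

end

theorem ConcaveOn.of_tendsto {ι E : Type*} [AddCommGroup E] [Module ℝ E] {l : Filter ι}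
    [l.NeBot] {s : Set E} {f : ι → E → ℝ} {g : E → ℝ}
    (hf : ∀ᶠ i in l, ConcaveOn ℝ s (f i))
    (hlim : ∀ x ∈ s, Tendsto (fun i => f i x) l (nhds (g x))) : ConcaveOn ℝ s g := by
  refine ⟨hf.exists.choose_spec.1, fun x hx y hy a b ha hb hab => ?_⟩
  refine le_of_tendsto_of_tendsto (((hlim x hx).const_smul a).add ((hlim y hy).const_smul b))
    (hlim _ (hf.exists.choose_spec.1 hx hy ha hb hab)) ?_
  filter_upwards [hf] with i hi using hi.2 hx hy ha hb hab

open BohrMollerup in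
theorem concaveOn_log_Gamma_add_sub_mul_log {β : ℝ} (hβ : 1 / 2 ≤ β) :
    ConcaveOn ℝ (Set.Ioi 0) (fun x => log (Gamma (x + β)) - x * log x) :=
  ConcaveOn.of_tendsto (l := atTop)
    (Eventually.of_forall (concaveOn_logGammaSeq_add_sub_mul_log · hβ))
    fun x hx => (tendsto_log_gamma (by rw [Set.mem_Ioi] at hx; linarith)).sub_const _

theorem concaveOn_log_Gamma_add_sub_add_mul_log {α β : ℝ} (hβ : 1 / 2 ≤ β) (hαβ : β ≤ α) :
    ConcaveOn ℝ (Set.Ioi 0) (fun x => log (Gamma (x + β)) - (x + β - α) * log x) :=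
  ((concaveOn_log_Gamma_add_sub_mul_log hβ).add
    (strictConcaveOn_log_Ioi.concaveOn.smul (sub_nonneg.2 hαβ))).congr fun x _ => by
      simp only [Pi.add_apply, smul_eq_mul]
      ring

theorem stmt_11_general (α β : ℝ) (n : ℕ) (x p : Fin n → ℝ)
    (hx : ∀ k, 0 < x k) (hp : ∀ k, 0 ≤ p k) (hsum : ∑ k, p k = 1)
    (hβ : 1 / 2 ≤ β) (hαβ : β ≤ α) :
    (∏ k, Real.Gamma (x k + β) ^ p k) / Real.Gamma (∑ k, p k * x k + β)
      ≤ (∏ k, x k ^ (p k * (x k + β - α))) /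
          (∑ k, p k * x k) ^ (∑ k, p k * x k + β - α) := by
  have jensen := (concaveOn_log_Gamma_add_sub_add_mul_log hβ hαβ).le_map_sum
    (fun k _ => hp k) hsum (fun k _ => hx k)
  simp only [smul_eq_mul, mul_sub, sum_sub_distrib] at jensen
  have hs : 0 < ∑ k, p k * x k :=
    (convex_Ioi (0 : ℝ)).sum_mem (fun k _ => hp k) hsum (fun k _ => hx k)
  have hΓ {y : ℝ} (hy : 0 < y) : 0 < Gamma (y + β) := Gamma_pos_of_pos (by linarith)
  have hL : 0 < ∏ k, Gamma (x k + β) ^ p k := prod_pos fun k _ => rpow_pos_of_pos (hΓ (hx k)) _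
  have hR : 0 < ∏ k, x k ^ (p k * (x k + β - α)) := prod_pos fun k _ => rpow_pos_of_pos (hx k) _
  have hs' := rpow_pos_of_pos hs (∑ k, p k * x k + β - α)
  rw [← log_le_log_iff (div_pos hL (hΓ hs)) (div_pos hR hs'), log_div hL.ne' (hΓ hs).ne',
    log_div hR.ne' hs'.ne', log_prod fun k _ => (rpow_pos_of_pos (hΓ (hx k)) _).ne',
    log_prod fun k _ => (rpow_pos_of_pos (hx k) _).ne', log_rpow hs]
  simp only [log_rpow (hx _), log_rpow (hΓ (hx _)), mul_assoc]
  linarith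

theorem stmt_11 (α β : ℝ) (n : ℕ) (hn : 1 ≤ n) (x p : Fin n → ℝ)
    (hx : ∀ k, 0 < x k) (hp : ∀ k, 0 ≤ p k) (hsum : ∑ k, p k = 1)
    (hβ : 1 / 2 ≤ β) (hαβ : β ≤ α) :
    (∏ k, Real.Gamma (x k + β) ^ p k) / Real.Gamma (∑ k, p k * x k + β)
      ≤ (∏ k, x k ^ (p k * (x k + β - α))) /
          (∑ k, p k * x k) ^ (∑ k, p k * x k + β - α) :=
  stmt_11_general α β n x p hx hp hsum hβ hαβ
end
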